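/- Let A be a simple probabilistic word automaton (all transition probabilities in {0, 1/2, 1}) with Rabin acceptance. Construct B by adding, for each state q that is the target of some probability-1 transition, a fresh copy q', splitting every probability-1 transition (p,a,q) into two probability-1/2 transitions to q and q' (and duplicating outgoing transitions of q for q'), with q' inheriting membership in each Rabin pair from q. Then for every word w, the measure of accepting runs of B on w equals the measure of accepting runs of A on w; in particular the almost-sure languages and the probable languages of A and B coincide, and B is binary branching. -/

import Mathlib

open MeasureTheory

/-- The set of states occurring infinitely often in `ρ`. -/
def infOcc {Q : Type*} (ρ : ℕ → Q) : Set Q := {q | ∀ N, ∃ n ≥ N, ρ n = q}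

/-- Rabin acceptance for pairs `⟨α_i, β_i⟩`. -/
def rabinAcc {Q : Type*} {k : ℕ} (pairs : Fin k → Set Q × Set Q) (ρ : ℕ → Q) : Prop :=
  ∃ i, (infOcc ρ ∩ (pairs i).1).Nonempty ∧ infOcc ρ ∩ (pairs i).2 = ∅

/-- States of the automaton `B`: the states of `A` together with a fresh copy
`q'` of each state `q` that is the target of some probability-1 transition. -/
def CopyStates {Q A : Type*} (δ : Q → A → Q → ℝ) : Type _ :=
  Q ⊕ {q : Q // ∃ p a, δ p a q = 1}

/-- The underlying `A`-state of a `B`-state. -/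
def under {Q A : Type*} {δ : Q → A → Q → ℝ} : CopyStates δ → Q :=
  Sum.elim id Subtype.val

open Classical in
/-- Transitions of `B`: each probability-1 transition `(p,a,q)` is split into
two probability-1/2 transitions to `q` and its copy `q'`; probability-1/2
transitions are kept; copies behave like the states they copy. -/
noncomputable def deltaB {Q A : Type*} (δ : Q → A → Q → ℝ) :
    CopyStates δ → A → CopyStates δ → ℝ :=
  fun s a s' =>
    match s' with
    | .inl q => if δ (under s) a q = 1 then 1 / 2 else δ (under s) a q
    | .inr q => if δ (under s) a q.val = 1 then 1 / 2 else 0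


/-!
Both automata can be driven by one sequence of fair coin flips. On letter `a` from a state
over `p`, the two outcomes of a flip lead in `B` to `q` and its copy `q'` when `δ p a q = 1`,
and to the two successors of probability `1/2` otherwise; forgetting copies (the map `under`)
turns this into a coin-driven simulation of `A`.

The run measures are only known on cylinders and live on arbitrary σ-algebras, so they are
treated as outer measures. The image of the coin measure under a coin-driven run map has the
same cylinder values, and any outer measure with these values agrees with it on measurable sets:
by outer regularity it suffices to compare the two on open sets, and an open set of sequences is
a disjoint union of cylinders.

Since `B` has finitely many states, `under` maps the states a run of `B` visits infinitely often
onto those its image visits infinitely often, so the lifted Rabin condition holds for a run of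
`B` iff the original one holds for its image. Both accepting-run measures are thus the coin
measure of one set of flip sequences.
-/

open Set PiNat TopologicalSpace
open scoped ENNReal

section Cylinders

variable {E : Type*}

theorem PiNat.setOf_forall_le_eq_cylinder (x : ℕ → E) (n : ℕ) :
    {σ : ℕ → E | ∀ i ≤ n, σ i = x i} = cylinder x (n + 1) := by
  ext σ
  simp [mem_cylinder_iff]

theorem PiNat.countable_setOf_cylinder [Countable E] :
    {C : Set (ℕ → E) | ∃ x n, C = cylinder x n}.Countable := by
  refine (countable_iUnion fun n => countable_range
    fun v : Fin n → E => {y : ℕ → E | ∀ i : Fin n, y i = v i}).mono ?_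
  rintro _ ⟨x, n, rfl⟩
  exact mem_iUnion.2 ⟨n, fun i => x i, by ext y; simp [mem_cylinder_iff, Fin.forall_iff]⟩

theorem PiNat.measurableSet_cylinder [MeasurableSpace E] [DiscreteMeasurableSpace E]
    (x : ℕ → E) (n : ℕ) : MeasurableSet (cylinder x n) := by
  rw [cylinder_eq_pi]
  exact .pi (Finset.range n).countable_toSet fun i _ => measurableSet_singleton (x i)

theorem PiNat.cylinder_eq_of_not_disjoint {x y : ℕ → E} {m n : ℕ} (hmn : m ≤ n)
    (h : ¬Disjoint (cylinder x m) (cylinder y n)) : cylinder y m = cylinder x m := by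
  obtain ⟨z, hzx, hzy⟩ := not_disjoint_iff.1 h
  exact (mem_cylinder_iff_eq.1 (cylinder_anti y hmn hzy)).symm.trans (mem_cylinder_iff_eq.1 hzx)

/-- Around each point of `U` take the largest cylinder of positive depth inside `U`; two of
these are nested or disjoint, hence equal or disjoint. -/
theorem PiNat.exists_pairwiseDisjoint_cylinders [TopologicalSpace E] [DiscreteTopology E]
    [Countable E] {U : Set (ℕ → E)} (hU : IsOpen U) :
    ∃ S : Set (Set (ℕ → E)), S.Countable ∧ S.Pairwise Disjoint ∧
      (∀ C ∈ S, ∃ x n, C = cylinder x (n + 1)) ∧ ⋃₀ S = U := by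
  classical
  have hdepth : ∀ x : U, ∃ n, cylinder (x : ℕ → E) (n + 1) ⊆ U := by
    rintro ⟨x, hx⟩
    obtain ⟨_, ⟨y, n, rfl⟩, hxy, hyU⟩ :=
      (isTopologicalBasis_cylinders fun _ => E).exists_subset_of_mem_open hx hU
    exact ⟨n, (cylinder_anti x n.le_succ).trans (mem_cylinder_iff_eq.1 hxy ▸ hyU)⟩
  let depth (x : U) : ℕ := Nat.find (hdepth x)
  let M (x : U) : Set (ℕ → E) := cylinder x (depth x + 1)
  have hM : ∀ x y, depth x ≤ depth y → ¬Disjoint (M x) (M y) → M x = M y := by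
    intro x y hle hxy
    have hyx := cylinder_eq_of_not_disjoint (by omega) hxy
    have hge : depth y ≤ depth x := Nat.find_min' _ (hyx ▸ Nat.find_spec (hdepth x))
    simp only [M, le_antisymm hle hge] at hyx ⊢
    exact hyx.symm
  refine ⟨range M, countable_setOf_cylinder.mono ?_, ?_, ?_, ?_⟩
  · rintro _ ⟨x, rfl⟩
    exact ⟨x, _, rfl⟩
  · rintro _ ⟨x, rfl⟩ _ ⟨y, rfl⟩ hne
    by_contra hxy
    rcases le_total (depth x) (depth y) with h | h
    · exact hne (hM x y h hxy)
    · exact hne (hM y x h fun h' => hxy h'.symm).symm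
  · rintro _ ⟨x, rfl⟩
    exact ⟨x, _, rfl⟩
  · refine subset_antisymm (sUnion_subset ?_) fun x hx => ?_
    · rintro _ ⟨x, rfl⟩
      exact Nat.find_spec (hdepth x)
    · exact ⟨M ⟨x, hx⟩, mem_range_self _, self_mem_cylinder _ _⟩

variable {F : Type*} [FunLike F (Set (ℕ → E)) ℝ≥0∞] [OuterMeasureClass F (ℕ → E)]
  [MeasurableSpace E] [DiscreteMeasurableSpace E] [Countable E]

theorem apply_le_of_cylinder_le_of_isOpen [TopologicalSpace E] [DiscreteTopology E] (μ : F)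
    (ν : Measure (ℕ → E)) (h : ∀ x n, μ (cylinder x (n + 1)) ≤ ν (cylinder x (n + 1)))
    {U : Set (ℕ → E)} (hU : IsOpen U) : μ U ≤ ν U := by
  obtain ⟨S, hSc, hSd, hScyl, rfl⟩ := exists_pairwiseDisjoint_cylinders hU
  have hmeas : ∀ C ∈ S, MeasurableSet C := fun C hC => by
    obtain ⟨x, n, rfl⟩ := hScyl C hC
    exact measurableSet_cylinder x (n + 1)
  calc μ (⋃₀ S) ≤ ∑' C : S, μ C := by
        rw [sUnion_eq_biUnion]; exact measure_biUnion_le μ hSc id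
    _ ≤ ∑' C : S, ν C := ENNReal.tsum_le_tsum fun ⟨C, hC⟩ => by
        obtain ⟨x, n, rfl⟩ := hScyl C hC
        exact h x n
    _ = ν (⋃₀ S) := (measure_sUnion hSc hSd hmeas).symm

theorem apply_le_of_cylinder_le (μ : F) (ν : Measure (ℕ → E)) [IsFiniteMeasure ν]
    (h : ∀ x n, μ (cylinder x (n + 1)) ≤ ν (cylinder x (n + 1))) (Y : Set (ℕ → E)) :
    μ Y ≤ ν Y := by
  -- a discrete topology on `E`, only to use the outer regularity of `ν`
  let : TopologicalSpace E := ⊥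
  have : DiscreteTopology E := ⟨rfl⟩
  refine ENNReal.le_of_forall_pos_le_add fun ε hε _ => ?_
  obtain ⟨U, hYU, hU, hνU⟩ := Y.exists_isOpen_le_add ν (ENNReal.coe_ne_zero.2 hε.ne')
  exact (measure_mono hYU).trans ((apply_le_of_cylinder_le_of_isOpen μ ν h hU).trans hνU)

theorem apply_eq_of_cylinder_le (μ : F) (ν : Measure (ℕ → E)) [IsFiniteMeasure ν]
    (h : ∀ x n, μ (cylinder x (n + 1)) ≤ ν (cylinder x (n + 1))) (huniv : ν univ ≤ μ univ)
    {X : Set (ℕ → E)} (hX : MeasurableSet X) : μ X = ν X := by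
  refine le_antisymm (apply_le_of_cylinder_le μ ν h X)
    ((ENNReal.add_le_add_iff_right (measure_ne_top ν Xᶜ)).1 ?_)
  calc ν X + ν Xᶜ = ν univ := measure_add_measure_compl hX
    _ ≤ μ univ := huniv
    _ ≤ μ X + μ Xᶜ := union_compl_self X ▸ measure_union_le X Xᶜ
    _ ≤ μ X + ν Xᶜ := by gcongr; exact apply_le_of_cylinder_le μ ν h Xᶜ

end Cylinders

section Coin

noncomputable def coinFlip : Measure Bool := (PMF.uniformOfFintype Bool).toMeasure

instance : IsProbabilityMeasure coinFlip := by unfold coinFlip; infer_instance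

theorem coinFlip_setOf_eq {X : Type*} [DecidableEq X] (f : Bool → X) (x : X) :
    coinFlip {c | f c = x} =
      (if f false = x then 2⁻¹ else 0) + (if f true = x then 2⁻¹ else 0) := by
  simp [coinFlip, PMF.toMeasure_apply_fintype, Set.indicator_apply, add_comm]

theorem coinFlip_setOf_eq_pos {X : Type*} (f : Bool → X) (c : Bool) :
    0 < coinFlip {c' | f c' = f c} := by
  classical
  cases c <;> simp [coinFlip_setOf_eq]

noncomputable def coin : Measure (ℕ → Bool) := Measure.infinitePi fun _ => coinFlip

instance : IsProbabilityMeasure coin := by unfold coin; infer_instance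

end Coin

section Runs

variable {F G S T A : Type*} {k : ℕ}

def IsRunMeasure [FunLike F (Set (ℕ → S)) ℝ≥0∞] [DecidableEq S] (μ : F) (d : S → A → S → ℝ)
    (s₀ : S) (w : ℕ → A) : Prop :=
  ∀ (n : ℕ) (ρ : ℕ → S), μ {σ | ∀ i ≤ n, σ i = ρ i} =
    (if ρ 0 = s₀ then 1 else 0) * ∏ i ∈ Finset.range n, ENNReal.ofReal (d (ρ i) (w i) (ρ (i + 1)))

def acceptedRuns (d : S → A → S → ℝ) (s₀ : S) (w : ℕ → A) (pairs : Fin k → Set S × Set S) :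
    Set (ℕ → S) :=
  {ρ | (ρ 0 = s₀ ∧ ∀ n, 0 < d (ρ n) (w n) (ρ (n + 1))) ∧ rabinAcc pairs ρ}

def CoinRealizes (g : S → A → Bool → S) (d : S → A → S → ℝ) : Prop :=
  ∀ s a s', coinFlip {c | g s a c = s'} = ENNReal.ofReal (d s a s')

def coinRun (g : S → A → Bool → S) (s₀ : S) (w : ℕ → A) (b : ℕ → Bool) : ℕ → S
  | 0 => s₀
  | n + 1 => g (coinRun g s₀ w b n) (w n) (b n)

theorem comp_coinRun {g : S → A → Bool → S} {h : T → A → Bool → T} (π : S → T)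
    (hπ : ∀ s a c, π (g s a c) = h (π s) a c) (s₀ : S) (w : ℕ → A) (b : ℕ → Bool) :
    π ∘ coinRun g s₀ w b = coinRun h (π s₀) w b := by
  funext n
  induction n with
  | zero => rfl
  | succ n ih => simp only [Function.comp_apply, coinRun] at ih ⊢; rw [hπ, ih]

theorem coinRun_mem_setOf_forall_le_iff {g : S → A → Bool → S} {s₀ : S} {w : ℕ → A}
    {b : ℕ → Bool} {n : ℕ} {ρ : ℕ → S} :
    coinRun g s₀ w b ∈ {σ | ∀ i ≤ n, σ i = ρ i} ↔
      ρ 0 = s₀ ∧ ∀ i < n, g (ρ i) (w i) (b i) = ρ (i + 1) := by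
  refine ⟨fun h => ⟨(h 0 n.zero_le).symm, fun i hi => ?_⟩, fun ⟨h0, h⟩ i hi => ?_⟩
  · rw [← h i hi.le, ← h (i + 1) hi]; rfl
  · induction i with
    | zero => exact h0.symm
    | succ i ih => rw [← h i hi, ← ih (by omega)]; rfl

theorem infOcc_comp [Finite S] (π : S → T) (τ : ℕ → S) : infOcc (π ∘ τ) = π '' infOcc τ := by
  ext q
  simp only [infOcc, mem_ofPred_eq, mem_image, ← Filter.frequently_atTop, Function.comp_apply]
  calc (∃ᶠ n in Filter.atTop, π (τ n) = q) ↔ ∃ᶠ n in Filter.atTop, ∃ s, τ n = s ∧ π s = q := by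
        simp only [exists_eq_left']
    _ ↔ ∃ s, ∃ᶠ n in Filter.atTop, τ n = s ∧ π s = q := Filter.frequently_exists
    _ ↔ ∃ s, (∃ᶠ n in Filter.atTop, τ n = s) ∧ π s = q := by
        simp only [Filter.frequently_and_distrib_right]

theorem rabinAcc_comp [Finite S] (π : S → T) (pairs : Fin k → Set T × Set T) (τ : ℕ → S) :
    rabinAcc (fun i => (π ⁻¹' (pairs i).1, π ⁻¹' (pairs i).2)) τ ↔ rabinAcc pairs (π ∘ τ) := by
  simp only [rabinAcc, infOcc_comp, ← not_nonempty_iff_eq_empty, image_inter_nonempty_iff]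

variable {d : S → A → S → ℝ} {g : S → A → Bool → S}

theorem CoinRealizes.coinRun_pos (hg : CoinRealizes g d) (s₀ : S) (w : ℕ → A) (b : ℕ → Bool)
    (n : ℕ) : 0 < d (coinRun g s₀ w b n) (w n) (coinRun g s₀ w b (n + 1)) :=
  ENNReal.ofReal_pos.1 (hg _ _ _ ▸ coinFlip_setOf_eq_pos _ (b n))

section Measurability

variable [MeasurableSpace S] [DiscreteMeasurableSpace S] [Countable S]

theorem measurable_coinRun (g : S → A → Bool → S) (s₀ : S) (w : ℕ → A) :
    Measurable (coinRun g s₀ w) := by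
  refine measurable_pi_iff.2 fun n => ?_
  induction n with
  | zero => exact measurable_const
  | succ n ih =>
    exact (measurable_of_countable fun p : S × Bool => g p.1 (w n) p.2).comp
      (ih.prodMk (measurable_pi_apply n))

theorem measurableSet_acceptedRuns (d : S → A → S → ℝ) (s₀ : S) (w : ℕ → A)
    (pairs : Fin k → Set S × Set S) : MeasurableSet (acceptedRuns d s₀ w pairs) := by
  have hocc : ∀ q, Measurable fun ρ : ℕ → S => q ∈ infOcc ρ := fun q =>
    .forall fun N => .exists fun n => measurable_const.and
      ((measurable_of_countable (· = q)).comp (measurable_pi_apply n))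
  have hstep : ∀ n (P : S → S → Prop), Measurable fun ρ : ℕ → S => P (ρ n) (ρ (n + 1)) :=
    fun n P => (measurable_of_countable fun p : S × S => P p.1 p.2).comp
      (f := fun ρ : ℕ → S => (ρ n, ρ (n + 1))) (by fun_prop)
  refine measurableSet_setOfPred.2 (Measurable.and (Measurable.and ?_ ?_) ?_)
  · exact (measurable_of_countable (· = s₀)).comp (measurable_pi_apply 0)
  · exact .forall fun n => hstep n fun p r => 0 < d p (w n) r
  · show Measurable fun ρ => rabinAcc pairs ρ
    simp only [rabinAcc, ← not_nonempty_iff_eq_empty, Set.Nonempty, mem_inter_iff]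
    exact .exists fun i => (Measurable.exists fun q => (hocc q).and measurable_const).and
      (Measurable.exists fun q => (hocc q).and measurable_const).not

theorem CoinRealizes.isRunMeasure_map [DecidableEq S] (hg : CoinRealizes g d) (s₀ : S)
    (w : ℕ → A) : IsRunMeasure (coin.map (coinRun g s₀ w)) d s₀ w := by
  intro n ρ
  rw [Measure.map_apply (measurable_coinRun g s₀ w)
    (setOf_forall_le_eq_cylinder ρ n ▸ measurableSet_cylinder ρ (n + 1))]
  split_ifs with h0
  · have : coinRun g s₀ w ⁻¹' {σ | ∀ i ≤ n, σ i = ρ i} =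
        Set.pi (Finset.range n : Set ℕ) fun i => {c | g (ρ i) (w i) c = ρ (i + 1)} := by
      ext b
      rw [mem_preimage, coinRun_mem_setOf_forall_le_iff]
      simp [h0]
    rw [this, coin, Measure.infinitePi_pi _ fun _ _ => .of_discrete, one_mul]
    exact Finset.prod_congr rfl fun i _ => hg _ _ _
  · have : coinRun g s₀ w ⁻¹' {σ | ∀ i ≤ n, σ i = ρ i} = ∅ :=
      eq_empty_of_forall_notMem fun b hb => h0 (coinRun_mem_setOf_forall_le_iff.1 hb).1
    rw [this, measure_empty, zero_mul]

end Measurability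

variable [FunLike F (Set (ℕ → S)) ℝ≥0∞] [OuterMeasureClass F (ℕ → S)] [DecidableEq S] {μ : F}
  {s₀ : S} {w : ℕ → A}

theorem IsRunMeasure.apply_eq [MeasurableSpace S] [DiscreteMeasurableSpace S] [Countable S]
    {ν : Measure (ℕ → S)} [IsProbabilityMeasure ν] (hμ : IsRunMeasure μ d s₀ w)
    (hν : IsRunMeasure ν d s₀ w) {X : Set (ℕ → S)} (hX : MeasurableSet X) : μ X = ν X := by
  refine apply_eq_of_cylinder_le μ ν (fun x n => ?_) ?_ hX
  · rw [← setOf_forall_le_eq_cylinder, hμ, hν]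
  · calc ν univ = μ {σ | ∀ i ≤ 0, σ i = s₀} := by rw [hμ 0 fun _ => s₀]; simp
      _ ≤ μ univ := measure_mono (subset_univ _)

theorem IsRunMeasure.apply_acceptedRuns [Countable S] (hμ : IsRunMeasure μ d s₀ w)
    (hg : CoinRealizes g d) (pairs : Fin k → Set S × Set S) :
    μ (acceptedRuns d s₀ w pairs) = coin {b | rabinAcc pairs (coinRun g s₀ w b)} := by
  -- the coin-driven run measure is built for the discrete σ-algebra on `S`
  let : MeasurableSpace S := ⊤
  have := Measure.isProbabilityMeasure_map (μ := coin) (measurable_coinRun g s₀ w).aemeasurable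
  rw [hμ.apply_eq (hg.isRunMeasure_map s₀ w) (measurableSet_acceptedRuns d s₀ w pairs),
    Measure.map_apply (measurable_coinRun g s₀ w) (measurableSet_acceptedRuns d s₀ w pairs)]
  congr 1
  ext b
  exact and_iff_right ⟨rfl, hg.coinRun_pos s₀ w b⟩

theorem IsRunMeasure.apply_acceptedRuns_preimage [Finite S] [Countable T]
    [FunLike G (Set (ℕ → T)) ℝ≥0∞] [OuterMeasureClass G (ℕ → T)] [DecidableEq T] {ν : G}
    {e : T → A → T → ℝ} {h : T → A → Bool → T} {π : S → T} (hμ : IsRunMeasure μ d s₀ w)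
    (hν : IsRunMeasure ν e (π s₀) w) (hg : CoinRealizes g d) (hh : CoinRealizes h e)
    (hπ : ∀ s a c, π (g s a c) = h (π s) a c) (pairs : Fin k → Set T × Set T) :
    μ (acceptedRuns d s₀ w fun i => (π ⁻¹' (pairs i).1, π ⁻¹' (pairs i).2)) =
      ν (acceptedRuns e (π s₀) w pairs) := by
  rw [hμ.apply_acceptedRuns hg, hν.apply_acceptedRuns hh]
  simp only [rabinAcc_comp, comp_coinRun π hπ]

end Runs

section Automaton

variable {Q A : Type*}

theorem deltaB_eq_zero_or_half {δ : Q → A → Q → ℝ}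
    (hsimple : ∀ q a p, δ q a p = 0 ∨ δ q a p = 1 / 2 ∨ δ q a p = 1) (s : CopyStates δ) (a : A)
    (s' : CopyStates δ) : deltaB δ s a s' = 0 ∨ deltaB δ s a s' = 1 / 2 := by
  rcases s' with q | q <;> simp only [deltaB] <;> split_ifs with h
  · exact .inr rfl
  · exact (hsimple (under s) a q).imp_right fun h' => h'.resolve_right h
  · exact .inr rfl
  · exact .inl rfl

variable [Fintype Q]

theorem exists_single_or_pair_of_simple [DecidableEq Q] {d : Q → ℝ}
    (hd : ∀ q, d q = 0 ∨ d q = 1 / 2 ∨ d q = 1) (hsum : ∑ q, d q = 1) :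
    (∃ q, ∀ r, d r = if r = q then 1 else 0) ∨
      ∃ q₁ q₂, q₁ ≠ q₂ ∧ ∀ r, d r = if r = q₁ ∨ r = q₂ then 1 / 2 else 0 := by
  have hnonneg : ∀ q ∈ Finset.univ, 0 ≤ d q := fun q _ => by
    rcases hd q with h | h | h <;> rw [h] <;> norm_num
  by_cases h1 : ∃ q, d q = 1
  · obtain ⟨q, hq⟩ := h1
    refine .inl ⟨q, fun r => ?_⟩
    split_ifs with hr
    · rw [hr, hq]
    · have := Finset.add_le_sum hnonneg (Finset.mem_univ q) (Finset.mem_univ r) (Ne.symm hr)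
      rcases hd r with h | h | h <;> [exact h; linarith; linarith]
  · push Not at h1
    let S := Finset.univ.filter fun q => d q = 1 / 2
    have hdS : ∀ r, d r = if r ∈ S then 1 / 2 else 0 := fun r => by
      rcases hd r with h | h | h
      · simp [S, h]
      · simp [S, h]
      · exact absurd h (h1 r)
    have hcard : (S.card : ℝ) / 2 = 1 := by
      rw [← hsum, Finset.sum_congr rfl fun r _ => hdS r, Finset.sum_ite_mem, Finset.univ_inter,
        Finset.sum_const, nsmul_eq_mul]
      ring
    obtain ⟨q₁, q₂, hne, hS⟩ :=
      Finset.card_eq_two.1 (by exact_mod_cast (by linarith : (S.card : ℝ) = 2))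
    exact .inr ⟨q₁, q₂, hne, fun r => by simp [hdS r, hS]⟩

/-- Stated for `Q ⊕ _` rather than `CopyStates δ`: `simp` only sees the constructors of `⊕` at
the type `Q ⊕ _`. -/
theorem exists_coinSuccessor {δ : Q → A → Q → ℝ}
    (hsimple : ∀ q a p, δ q a p = 0 ∨ δ q a p = 1 / 2 ∨ δ q a p = 1)
    (hsum : ∀ q a, ∑ p, δ q a p = 1) (p : Q) (a : A) :
    ∃ f : Bool → Q ⊕ {q // ∃ p a, δ p a q = 1},
      (∀ s', coinFlip {c | f c = s'} = ENNReal.ofReal (deltaB δ (.inl p) a s')) ∧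
      ∀ q, coinFlip {c | under (δ := δ) (f c) = q} = ENNReal.ofReal (δ p a q) := by
  classical
  rcases exists_single_or_pair_of_simple (hsimple p a) (hsum p a) with
    ⟨q, hq⟩ | ⟨q₁, q₂, hne, hq⟩
  · have h1 : δ p a q = 1 := by simp [hq]
    refine ⟨fun c => cond c (.inr ⟨q, p, a, h1⟩) (.inl q), ?_, fun r => ?_⟩
    · rintro (r | ⟨r, hr⟩) <;>
        by_cases hrq : r = q <;> simp [coinFlip_setOf_eq, deltaB, under, hq, hrq, Ne.symm]
    · by_cases hrq : r = q <;>
        simp [coinFlip_setOf_eq, under, hq, hrq, Ne.symm, ENNReal.inv_two_add_inv_two]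
  · have h1 : ∀ r, δ p a r ≠ 1 := fun r => by rw [hq r]; split_ifs <;> norm_num
    refine ⟨fun c => .inl (cond c q₂ q₁), ?_, fun r => ?_⟩
    · rintro (r | ⟨r, hr⟩)
      · by_cases hr₁ : r = q₁ <;> by_cases hr₂ : r = q₂ <;>
          simp_all [coinFlip_setOf_eq, deltaB, under, Ne.symm]
      · simp [deltaB, under, h1]
    · by_cases hr₁ : r = q₁ <;> by_cases hr₂ : r = q₂ <;>
        simp_all [coinFlip_setOf_eq, under, Ne.symm]

theorem exists_coinRealizes_deltaB {δ : Q → A → Q → ℝ}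
    (hsimple : ∀ q a p, δ q a p = 0 ∨ δ q a p = 1 / 2 ∨ δ q a p = 1)
    (hsum : ∀ q a, ∑ p, δ q a p = 1) :
    ∃ succ : Q → A → Bool → CopyStates δ,
      CoinRealizes (fun s a => succ (under s) a) (deltaB δ) ∧
      CoinRealizes (fun p a c => under (succ p a c)) δ := by
  choose succ hB hA using exists_coinSuccessor hsimple hsum
  exact ⟨succ, fun s a => hB (under s) a, hA⟩

end Automaton

instance {Q A : Type*} [Finite Q] (δ : Q → A → Q → ℝ) : Finite (CopyStates δ) :=
  inferInstanceAs (Finite (Q ⊕ _))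

open Classical

theorem simple_to_binary_branching_general {Q A : Type*} [Fintype Q] [DecidableEq Q]
    [MeasurableSpace Q] {k : ℕ}
    (δ : Q → A → Q → ℝ) (qi : Q) (pairs : Fin k → Set Q × Set Q)
    (hsimple : ∀ q a p, δ q a p = 0 ∨ δ q a p = 1 / 2 ∨ δ q a p = 1)
    (hsum : ∀ q a, ∑ p, δ q a p = 1)
    (w : ℕ → A)
    -- the run measure of `A` on `w`
    (μA : Measure (ℕ → Q))
    (hμA : ∀ (n : ℕ) (ρ : ℕ → Q), μA {σ | ∀ i ≤ n, σ i = ρ i} =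
      (if ρ 0 = qi then 1 else 0) *
        ∏ i ∈ Finset.range n, ENNReal.ofReal (δ (ρ i) (w i) (ρ (i + 1))))
    -- the run measure of `B` on `w`
    (mQ' : MeasurableSpace (CopyStates δ))
    (μB : Measure (ℕ → CopyStates δ))
    (hμB : ∀ (n : ℕ) (τ : ℕ → CopyStates δ), μB {σ | ∀ i ≤ n, σ i = τ i} =
      (if τ 0 = Sum.inl qi then 1 else 0) *
        ∏ i ∈ Finset.range n, ENNReal.ofReal (deltaB δ (τ i) (w i) (τ (i + 1)))) :
    -- `B` is binary branching
    (∀ (s : CopyStates δ) (a : A) (s' : CopyStates δ),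
      deltaB δ s a s' = 0 ∨ deltaB δ s a s' = 1 / 2) ∧
    -- the measures of accepting runs coincide
    μA {ρ : ℕ → Q | (ρ 0 = qi ∧ ∀ n, 0 < δ (ρ n) (w n) (ρ (n + 1))) ∧
        rabinAcc pairs ρ} =
      μB {τ : ℕ → CopyStates δ |
        (τ 0 = Sum.inl qi ∧ ∀ n, 0 < deltaB δ (τ n) (w n) (τ (n + 1))) ∧
        rabinAcc (fun i => ({s | under s ∈ (pairs i).1}, {s | under s ∈ (pairs i).2})) τ} ∧
    -- in particular almost-sure and probable acceptance coincide
    (μA {ρ : ℕ → Q | (ρ 0 = qi ∧ ∀ n, 0 < δ (ρ n) (w n) (ρ (n + 1))) ∧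
        rabinAcc pairs ρ} = 1 ↔
      μB {τ : ℕ → CopyStates δ |
        (τ 0 = Sum.inl qi ∧ ∀ n, 0 < deltaB δ (τ n) (w n) (τ (n + 1))) ∧
        rabinAcc (fun i => ({s | under s ∈ (pairs i).1}, {s | under s ∈ (pairs i).2})) τ} = 1) ∧
    (0 < μA {ρ : ℕ → Q | (ρ 0 = qi ∧ ∀ n, 0 < δ (ρ n) (w n) (ρ (n + 1))) ∧
        rabinAcc pairs ρ} ↔
      0 < μB {τ : ℕ → CopyStates δ |
        (τ 0 = Sum.inl qi ∧ ∀ n, 0 < deltaB δ (τ n) (w n) (τ (n + 1))) ∧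
        rabinAcc (fun i => ({s | under s ∈ (pairs i).1}, {s | under s ∈ (pairs i).2})) τ}) := by
  obtain ⟨succ, hB, hA⟩ := exists_coinRealizes_deltaB hsimple hsum
  have hrun := IsRunMeasure.apply_acceptedRuns_preimage (π := under)
    (hμB : IsRunMeasure μB (deltaB δ) (.inl qi) w) (hμA : IsRunMeasure μA δ qi w) hB hA
    (fun _ _ _ => rfl) pairs
  exact ⟨deltaB_eq_zero_or_half hsimple, hrun.symm, Iff.of_eq (congrArg (· = 1) hrun.symm),
    Iff.of_eq (congrArg (0 < ·) hrun.symm)⟩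

/-- From a simple probabilistic Rabin word automaton `A` (probabilities in
`{0,1/2,1}`) one obtains, by duplicating targets of probability-1 transitions,
a binary-branching Rabin automaton `B` (probabilities in `{0,1/2}`, with the
copies inheriting the Rabin pairs) such that for every word `w` the measure of
accepting runs of `B` on `w` equals that of `A` on `w`; in particular the
almost-sure and probable languages coincide. -/
theorem simple_to_binary_branching {Q A : Type*} [Fintype Q] [DecidableEq Q]
    [MeasurableSpace Q] {k : ℕ}
    (δ : Q → A → Q → ℝ) (qi : Q) (pairs : Fin k → Set Q × Set Q)
    (hsimple : ∀ q a p, δ q a p = 0 ∨ δ q a p = 1 / 2 ∨ δ q a p = 1)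
    (hsum : ∀ q a, ∑ p, δ q a p = 1)
    (w : ℕ → A)
    -- the run measure of `A` on `w`
    (μA : Measure (ℕ → Q)) [IsProbabilityMeasure μA]
    (hμA : ∀ (n : ℕ) (ρ : ℕ → Q), μA {σ | ∀ i ≤ n, σ i = ρ i} =
      (if ρ 0 = qi then 1 else 0) *
        ∏ i ∈ Finset.range n, ENNReal.ofReal (δ (ρ i) (w i) (ρ (i + 1))))
    -- the run measure of `B` on `w`
    (mQ' : MeasurableSpace (CopyStates δ))
    (μB : Measure (ℕ → CopyStates δ)) [IsProbabilityMeasure μB]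
    (hμB : ∀ (n : ℕ) (τ : ℕ → CopyStates δ), μB {σ | ∀ i ≤ n, σ i = τ i} =
      (if τ 0 = Sum.inl qi then 1 else 0) *
        ∏ i ∈ Finset.range n, ENNReal.ofReal (deltaB δ (τ i) (w i) (τ (i + 1)))) :
    -- `B` is binary branching
    (∀ (s : CopyStates δ) (a : A) (s' : CopyStates δ),
      deltaB δ s a s' = 0 ∨ deltaB δ s a s' = 1 / 2) ∧
    -- the measures of accepting runs coincide
    μA {ρ : ℕ → Q | (ρ 0 = qi ∧ ∀ n, 0 < δ (ρ n) (w n) (ρ (n + 1))) ∧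
        rabinAcc pairs ρ} =
      μB {τ : ℕ → CopyStates δ |
        (τ 0 = Sum.inl qi ∧ ∀ n, 0 < deltaB δ (τ n) (w n) (τ (n + 1))) ∧
        rabinAcc (fun i => ({s | under s ∈ (pairs i).1}, {s | under s ∈ (pairs i).2})) τ} ∧
    -- in particular almost-sure and probable acceptance coincide
    (μA {ρ : ℕ → Q | (ρ 0 = qi ∧ ∀ n, 0 < δ (ρ n) (w n) (ρ (n + 1))) ∧
        rabinAcc pairs ρ} = 1 ↔
      μB {τ : ℕ → CopyStates δ |
        (τ 0 = Sum.inl qi ∧ ∀ n, 0 < deltaB δ (τ n) (w n) (τ (n + 1))) ∧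
        rabinAcc (fun i => ({s | under s ∈ (pairs i).1}, {s | under s ∈ (pairs i).2})) τ} = 1) ∧
    (0 < μA {ρ : ℕ → Q | (ρ 0 = qi ∧ ∀ n, 0 < δ (ρ n) (w n) (ρ (n + 1))) ∧
        rabinAcc pairs ρ} ↔
      0 < μB {τ : ℕ → CopyStates δ |
        (τ 0 = Sum.inl qi ∧ ∀ n, 0 < deltaB δ (τ n) (w n) (τ (n + 1))) ∧
        rabinAcc (fun i => ({s | under s ∈ (pairs i).1}, {s | under s ∈ (pairs i).2})) τ}) :=
  simple_to_binary_branching_general δ qi pairs hsimple hsum w μA hμA mQ' μB hμB
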